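/- Let A be a differential K-algebra without exponents nor logarithm, and M, N regular singular differential modules over A (finite free as A-modules and trivialized by E_A as differential modules). Then Hom_A(M,N) and M ⊗_A N, with their canonical connections, are regular singular; in particular the dual M* is regular singular. -/

import Mathlib

open scoped TensorProduct
open Polynomial

noncomputable section

/-- `K[t,t⁻¹] → K[t^K]`: the inclusion of the Laurent polynomials (the group algebra
of `ℤ`) into the group algebra `K⟨K⟩ = K[t^K]` of the additive group `(K,+)`. -/
instance instLaurentToGrpAlg (K : Type) [Field K] :
    Algebra (LaurentPolynomial K) (AddMonoidAlgebra K K) :=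
  (AddMonoidAlgebra.mapDomainRingHom K (Int.castAddHom K)).toAlgebra

variable (K : Type) [Field K] [IsAlgClosed K] [CharZero K]
variable (A : Type) [CommRing A] [Algebra K A] [Algebra (LaurentPolynomial K) A]
  [IsScalarTower K (LaurentPolynomial K) A]

/-- `A[t^K] := A ⊗_{K[t,t⁻¹]} K[t^K]`. -/
abbrev AtK := A ⊗[LaurentPolynomial K] (AddMonoidAlgebra K K)

/-- The ring of exponents `E_A := A[t^K][ℓ]`. -/
abbrev EA := Polynomial (AtK K A)

/-- The canonical inclusion `A → E_A`. -/
def iA : A →+* EA K A :=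
  (Polynomial.C).comp (Algebra.TensorProduct.includeLeftRingHom)

/-- The element `t^a ∈ A[t^K] ⊆ E_A`, for `a ∈ K`. -/
def tpow (a : K) : EA K A :=
  Polynomial.C ((1:A) ⊗ₜ[LaurentPolynomial K] (AddMonoidAlgebra.single a 1))

/-- `t ∈ A`, the image of the Laurent variable. -/
def tA : A := algebraMap (LaurentPolynomial K) A (LaurentPolynomial.T 1)

variable {K A}

/-- `∂ : A → A` is a derivation extending `t·d/dt` on `K[t,t⁻¹]`: it kills the
constants `K` and sends `t` to `t`. -/
def ExtendsTddt (dA : Derivation ℤ A A) : Prop :=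
  (∀ c : K, dA (algebraMap K A c) = 0) ∧ dA (tA K A) = tA K A

/-- The characterizing properties of the derivation `∂` on `E_A`: it extends the
derivation `∂` of `A`, satisfies `∂(t^a) = a·t^a` for all `a ∈ K`, and `∂(ℓ) = 1`. -/
def DProps (dA : Derivation ℤ A A) (D : Derivation ℤ (EA K A) (EA K A)) : Prop :=
  (∀ x : A, D (iA K A x) = iA K A (dA x)) ∧
  (∀ a : K, D (tpow K A a) = a • tpow K A a) ∧
  D (Polynomial.X : EA K A) = 1

/-- `γ : K → Kˣ` is a group homomorphism from `(K,+)` to `Kˣ` with kernel exactly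
`ℤ` (induced by a choice of isomorphism `K/ℤ ≅ Kˣ`). -/
def GammaProps (γ : K → Kˣ) : Prop :=
  (∀ a b : K, γ (a + b) = γ a * γ b) ∧ (∀ a : K, γ a = 1 ↔ ∃ n : ℤ, (n : K) = a)

/-- The characterizing properties of the monodromy automorphism `σ` of `E_A`:
it fixes `A` pointwise, `σ(t^a) = γ(a)·t^a`, and `σ(ℓ) = ℓ + 1`. -/
def SProps (γ : K → Kˣ) (σ : EA K A ≃+* EA K A) : Prop :=
  (∀ x : A, σ (iA K A x) = iA K A x) ∧
  (∀ a : K, σ (tpow K A a) = ((γ a : K) • tpow K A a)) ∧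
  σ (Polynomial.X : EA K A) = Polynomial.X + 1

/-- `A` is a differential `K`-algebra without exponents nor logarithm:
`A^{∂²=0} = K` and `A^{∂+a=0} = 0` for every `a ∈ K` not in `ℤ`. -/
def NoExpLog (dA : Derivation ℤ A A) : Prop :=
  (∀ x : A, dA (dA x) = 0 ↔ ∃ c : K, x = algebraMap K A c) ∧
  (∀ a : K, (¬ ∃ n : ℤ, (n : K) = a) → ∀ x : A, dA x + a • x = 0 → x = 0)


set_option synthInstance.maxHeartbeats 1000000
set_option maxHeartbeats 1000000


/-- `∇ : M → M` is a connection on the `A`-module `M` over `(A,∂)`: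
`∇(f·m) = ∂(f)·m + f·∇(m)`. -/
def IsConnection (dA : Derivation ℤ A A) {M : Type} [AddCommGroup M] [Module A M]
    (nb : M →+ M) : Prop :=
  ∀ (f : A) (m : M), nb (f • m) = dA f • m + f • nb m


/-- The differential module `(M,∇)` over `A` is regular singular: it is finite free
as an `A`-module and it is trivialized by `E_A`, i.e. `M ⊗_A E_A`, with the
connection `∇ ⊗ 1 + 1 ⊗ ∂`, is isomorphic as a differential module over `E_A` to a
finite direct sum of copies of `(E_A, ∂)`. -/
def IsRegSing (D : Derivation ℤ (EA K A) (EA K A))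
    {M : Type} [AddCommGroup M] [Module A M] (nb : M →+ M) : Prop :=
  Module.Finite A M ∧ Module.Free A M ∧
  ∃ nb' : (EA K A ⊗[A] M) →+ (EA K A ⊗[A] M),
    (∀ (x : EA K A) (m : M), nb' (x ⊗ₜ[A] m) = D x ⊗ₜ[A] m + x ⊗ₜ[A] nb m) ∧
    ∃ (n : ℕ) (φ : (EA K A ⊗[A] M) ≃ₗ[EA K A] (Fin n → EA K A)),
      ∀ w i, φ (nb' w) i = D (φ w i)

/-!
After base change along `A → E_A`, a connection compatible with `∂` becomes a connection over
`(E_A, ∂)`, and a trivialization of it is the same as a basis of horizontal sections.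
If `(vⱼ)` and `(wᵢ)` are horizontal bases of `E_A ⊗ M` and `E_A ⊗ N`, then the `vⱼ ⊗ wᵢ` are a
horizontal basis of `E_A ⊗ (M ⊗ N) ≅ (E_A ⊗ M) ⊗ (E_A ⊗ N)`, and the matrix units `vⱼ ↦ wᵢ` are
a horizontal basis of `Hom(E_A ⊗ M, E_A ⊗ N) ≅ E_A ⊗ Hom_A(M, N)` (here `M`, `N` are finite
free). The dual is the case `N = (A, ∂)`, whose base change has the horizontal basis `1 ⊗ 1`.
-/

section DifferentialModules

variable {S : Type} [CommRing S]

theorem isConnection_derivation (d : Derivation ℤ S S) : IsConnection d (d : S →+ S) := by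
  intro f m
  simp only [AddMonoidHom.coe_coe, Derivation.leibniz, smul_eq_mul]
  ring

theorem isConnection_linearMap {dS : Derivation ℤ S S} {M N : Type} [AddCommGroup M]
    [Module S M] [AddCommGroup N] [Module S N] {nM : M →+ M} {nN : N →+ N}
    (hnN : IsConnection dS nN) {nH : (M →ₗ[S] N) →+ (M →ₗ[S] N)}
    (hnH : ∀ (g : M →ₗ[S] N) (m : M), nH g m = nN (g m) - g (nM m)) :
    IsConnection dS nH := by
  intro f g
  ext m
  simp only [hnH, LinearMap.smul_apply, LinearMap.add_apply, smul_sub, hnN f (g m)]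
  abel

theorem isConnection_tensorProduct {dS : Derivation ℤ S S} {M N : Type} [AddCommGroup M]
    [Module S M] [AddCommGroup N] [Module S N] {nM : M →+ M} {nN : N →+ N}
    (hnM : IsConnection dS nM) {nT : M ⊗[S] N →+ M ⊗[S] N}
    (hnT : ∀ (m : M) (n : N), nT (m ⊗ₜ[S] n) = nM m ⊗ₜ[S] n + m ⊗ₜ[S] nN n) :
    IsConnection dS nT := by
  intro f t
  induction t using TensorProduct.induction_on with
  | zero => simp
  | tmul m n =>
    rw [TensorProduct.smul_tmul', hnT, hnT, hnM f m, TensorProduct.add_tmul, smul_add,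
      TensorProduct.smul_tmul', TensorProduct.smul_tmul']
    abel
  | add t₁ t₂ ih₁ ih₂ =>
    rw [smul_add, map_add, ih₁, ih₂, map_add, smul_add, smul_add]
    abel

end DifferentialModules

section BaseChange

variable {S E : Type} [CommRing S] [CommRing E] [Algebra S E]
  {dS : Derivation ℤ S S} {dE : Derivation ℤ E E}

def baseChangeConn (hd : ∀ x : S, dE (algebraMap S E x) = algebraMap S E (dS x))
    {M : Type} [AddCommGroup M] [Module S M] (nM : M →+ M) (hnM : IsConnection dS nM) :
    E ⊗[S] M →+ E ⊗[S] M :=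
  TensorProduct.liftAddHom
    { toFun := fun x =>
        { toFun := fun m => dE x ⊗ₜ[S] m + x ⊗ₜ[S] nM m
          map_zero' := by simp
          map_add' := fun m₁ m₂ => by
            simp only [TensorProduct.tmul_add, map_add]
            abel }
      map_zero' := by ext; simp
      map_add' := fun x y => by
        ext m
        simp only [map_add, TensorProduct.add_tmul, AddMonoidHom.coe_mk, ZeroHom.coe_mk,
          AddMonoidHom.add_apply]
        abel }
    (fun r x m => by
      have hrx : dE (r • x) = r • dE x + algebraMap S E (dS r) * x := by
        rw [Algebra.smul_def, Derivation.leibniz, smul_eq_mul, smul_eq_mul, hd,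
          Algebra.smul_def]
        ring
      simp only [AddMonoidHom.coe_mk, ZeroHom.coe_mk]
      rw [hrx, hnM, TensorProduct.add_tmul, TensorProduct.tmul_add, TensorProduct.tmul_smul,
        TensorProduct.tmul_smul, TensorProduct.tmul_smul, TensorProduct.smul_tmul',
        TensorProduct.smul_tmul', TensorProduct.smul_tmul', Algebra.smul_def (dS r) x]
      abel)

variable (hd : ∀ x : S, dE (algebraMap S E x) = algebraMap S E (dS x))
  {M : Type} [AddCommGroup M] [Module S M] {nM : M →+ M} (hnM : IsConnection dS nM)

@[simp]
theorem baseChangeConn_tmul (x : E) (m : M) :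
    baseChangeConn hd nM hnM (x ⊗ₜ[S] m) = dE x ⊗ₜ[S] m + x ⊗ₜ[S] nM m :=
  TensorProduct.liftAddHom_tmul _ _ _ _

theorem isConnection_baseChangeConn : IsConnection dE (baseChangeConn hd nM hnM) := by
  intro c w
  induction w using TensorProduct.induction_on with
  | zero => simp
  | tmul x m =>
    rw [TensorProduct.smul_tmul', baseChangeConn_tmul, baseChangeConn_tmul, smul_eq_mul,
      Derivation.leibniz, smul_eq_mul, smul_eq_mul, smul_add, TensorProduct.add_tmul,
      TensorProduct.smul_tmul', TensorProduct.smul_tmul', TensorProduct.smul_tmul', smul_eq_mul,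
      smul_eq_mul, smul_eq_mul, mul_comm x (dE c)]
    abel
  | add w₁ w₂ ih₁ ih₂ =>
    rw [smul_add, map_add, ih₁, ih₂, map_add, smul_add, smul_add]
    abel

end BaseChange

section Trivial

variable {E : Type} [CommRing E] {dE : Derivation ℤ E E}
  {P : Type} [AddCommGroup P] [Module E P] {nP : P →+ P}

variable (dE) in
def IsTrivial (nP : P →+ P) : Prop :=
  ∃ (n : ℕ) (φ : P ≃ₗ[E] (Fin n → E)), ∀ w i, φ (nP w) i = dE (φ w i)

theorem IsTrivial.exists_basis (h : IsTrivial dE nP) :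
    ∃ (n : ℕ) (b : Module.Basis (Fin n) E P), ∀ i, nP (b i) = 0 := by
  obtain ⟨n, φ, hφ⟩ := h
  refine ⟨n, (Pi.basisFun E (Fin n)).map φ.symm, fun j => φ.injective (funext fun i => ?_)⟩
  rw [hφ, Module.Basis.map_apply, LinearEquiv.apply_symm_apply, Pi.basisFun_apply]
  rcases eq_or_ne i j with rfl | hij
  · simp
  · simp [Pi.single_eq_of_ne hij]

theorem isTrivial_of_basis (hnP : IsConnection dE nP) {ι : Type} [Fintype ι]
    (b : Module.Basis ι E P) (hb : ∀ i, nP (b i) = 0) : IsTrivial dE nP := by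
  refine ⟨Fintype.card ι, (b.reindex (Fintype.equivFin ι)).equivFun, fun w i => ?_⟩
  set b' := b.reindex (Fintype.equivFin ι)
  have hb' : ∀ j, nP (b' j) = 0 := fun j => by simp [b', hb]
  have hnw : nP w = ∑ j, dE (b'.equivFun w j) • b' j := by
    conv_lhs => rw [← b'.sum_equivFun w]
    rw [map_sum]
    exact Finset.sum_congr rfl fun j _ => by rw [hnP, hb', smul_zero, add_zero]
  rw [hnw, b'.equivFun_apply, b'.repr_sum_self, b'.equivFun_apply]

end Trivial

section LinearMapBaseChange

variable (S E M N : Type) [CommRing S] [CommRing E] [Algebra S E]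
  [AddCommGroup M] [Module S M] [Module.Finite S M] [Module.Free S M]
  [AddCommGroup N] [Module S N] [Module.Finite S N] [Module.Free S N]

-- Defined by matching standard bases because Mathlib's canonical map `LinearMap.tensorProduct`
-- comes without an inverse; `linearMapBaseChangeEquiv_tmul` identifies the two.
open Classical in
def linearMapBaseChangeEquiv : E ⊗[S] (M →ₗ[S] N) ≃ₗ[E] (E ⊗[S] M →ₗ[E] E ⊗[S] N) :=
  let bM := Module.Free.chooseBasis S M
  let bN := Module.Free.chooseBasis S N
  (Algebra.TensorProduct.basis E (bM.linearMap bN)).equiv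
    ((Algebra.TensorProduct.basis E bM).linearMap (Algebra.TensorProduct.basis E bN))
    (Equiv.refl _)

theorem linearMapBaseChangeEquiv_tmul (x : E) (g : M →ₗ[S] N) :
    linearMapBaseChangeEquiv S E M N (x ⊗ₜ g) = x • g.baseChange E := by
  classical
  have key : (linearMapBaseChangeEquiv S E M N : E ⊗[S] (M →ₗ[S] N) →ₗ[E] _) =
      LinearMap.tensorProduct S E M N := by
    refine (Algebra.TensorProduct.basis E
      ((Module.Free.chooseBasis S M).linearMap (Module.Free.chooseBasis S N))).ext fun ij => ?_
    rw [LinearEquiv.coe_coe, linearMapBaseChangeEquiv, Module.Basis.equiv_apply,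
      Algebra.TensorProduct.basis_apply]
    exact (Module.Basis.baseChange_linearMap E _ _ ij).symm.trans (one_smul E _).symm
  exact LinearMap.congr_fun key (x ⊗ₜ g)

theorem linearMapBaseChangeEquiv_tmul_tmul (x : E) (g : M →ₗ[S] N) (y : E) (m : M) :
    linearMapBaseChangeEquiv S E M N (x ⊗ₜ g) (y ⊗ₜ m) = (x * y) ⊗ₜ g m := by
  rw [linearMapBaseChangeEquiv_tmul, LinearMap.smul_apply, LinearMap.baseChange_tmul,
    TensorProduct.smul_tmul', smul_eq_mul]

end LinearMapBaseChange

section TrivializedBy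

variable {S E : Type} [CommRing S] [CommRing E] [Algebra S E]
  {dS : Derivation ℤ S S} {dE : Derivation ℤ E E}

variable (S dE) in
def TrivializedBy {M : Type} [AddCommGroup M] [Module S M] (nM : M →+ M) : Prop :=
  ∃ nb : E ⊗[S] M →+ E ⊗[S] M,
    (∀ (x : E) (m : M), nb (x ⊗ₜ[S] m) = dE x ⊗ₜ[S] m + x ⊗ₜ[S] nM m) ∧ IsTrivial dE nb

theorem trivializedBy_derivation (hd : ∀ x : S, dE (algebraMap S E x) = algebraMap S E (dS x)) :
    TrivializedBy S dE (dS : S →+ S) := by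
  refine ⟨_, baseChangeConn_tmul hd (isConnection_derivation dS),
    isTrivial_of_basis (isConnection_baseChangeConn hd _)
      (Algebra.TensorProduct.basis E (Module.Basis.singleton (Fin 1) S)) fun i => ?_⟩
  simp

variable {M N : Type} [AddCommGroup M] [Module S M] [AddCommGroup N] [Module S N]
  {nM : M →+ M} {nN : N →+ N}

theorem baseChangeConn_distribBaseChange_symm_tmul
    (hd : ∀ x : S, dE (algebraMap S E x) = algebraMap S E (dS x))
    {nbM : E ⊗[S] M →+ E ⊗[S] M} (hnbM : ∀ x m, nbM (x ⊗ₜ m) = dE x ⊗ₜ m + x ⊗ₜ nM m)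
    {nbN : E ⊗[S] N →+ E ⊗[S] N} (hnbN : ∀ x n, nbN (x ⊗ₜ n) = dE x ⊗ₜ n + x ⊗ₜ nN n)
    {nT : M ⊗[S] N →+ M ⊗[S] N} (hnT : IsConnection dS nT)
    (hnT_tmul : ∀ (m : M) (n : N), nT (m ⊗ₜ[S] n) = nM m ⊗ₜ[S] n + m ⊗ₜ[S] nN n)
    (u : E ⊗[S] M) (u' : E ⊗[S] N) :
    baseChangeConn hd nT hnT ((TensorProduct.AlgebraTensorModule.distribBaseChange S E M N).symm
        (u ⊗ₜ u')) =
      (TensorProduct.AlgebraTensorModule.distribBaseChange S E M N).symm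
        (nbM u ⊗ₜ u' + u ⊗ₜ nbN u') := by
  induction u using TensorProduct.induction_on with
  | zero => simp
  | add u₁ u₂ ih₁ ih₂ =>
    simp only [TensorProduct.add_tmul, map_add, ih₁, ih₂]
    abel
  | tmul x m =>
    induction u' using TensorProduct.induction_on with
    | zero => simp
    | add u₁ u₂ ih₁ ih₂ =>
      simp only [TensorProduct.tmul_add, map_add, ih₁, ih₂]
      abel
    | tmul y n =>
      simp only [hnbM, hnbN, TensorProduct.add_tmul, TensorProduct.tmul_add, map_add,
        TensorProduct.AlgebraTensorModule.distribBaseChange_symm_tmul, baseChangeConn_tmul,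
        hnT_tmul, Derivation.leibniz, smul_eq_mul]
      rw [mul_comm y (dE x)]
      abel

theorem TrivializedBy.tensorProduct
    (hd : ∀ x : S, dE (algebraMap S E x) = algebraMap S E (dS x))
    (hnM : IsConnection dS nM) (hM : TrivializedBy S dE nM) (hN : TrivializedBy S dE nN)
    {nT : M ⊗[S] N →+ M ⊗[S] N}
    (hnT : ∀ (m : M) (n : N), nT (m ⊗ₜ[S] n) = nM m ⊗ₜ[S] n + m ⊗ₜ[S] nN n) :
    TrivializedBy S dE nT := by
  obtain ⟨nbM, hnbM, hM⟩ := hM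
  obtain ⟨nbN, hnbN, hN⟩ := hN
  obtain ⟨_, v, hv⟩ := hM.exists_basis
  obtain ⟨_, w, hw⟩ := hN.exists_basis
  have hnT' := isConnection_tensorProduct hnM hnT
  refine ⟨_, baseChangeConn_tmul hd hnT', isTrivial_of_basis (isConnection_baseChangeConn hd _)
    ((v.tensorProduct w).map
      (TensorProduct.AlgebraTensorModule.distribBaseChange S E M N).symm) fun ij => ?_⟩
  rw [Module.Basis.map_apply, Module.Basis.tensorProduct_apply',
    baseChangeConn_distribBaseChange_symm_tmul hd hnbM hnbN hnT' hnT, hv, hw,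
    TensorProduct.zero_tmul, TensorProduct.tmul_zero, add_zero, map_zero]

theorem linearMapBaseChangeEquiv_baseChangeConn [Module.Finite S M] [Module.Free S M]
    [Module.Finite S N] [Module.Free S N]
    (hd : ∀ x : S, dE (algebraMap S E x) = algebraMap S E (dS x))
    {nbM : E ⊗[S] M →+ E ⊗[S] M} (hnbM : ∀ x m, nbM (x ⊗ₜ m) = dE x ⊗ₜ m + x ⊗ₜ nM m)
    {nbN : E ⊗[S] N →+ E ⊗[S] N} (hnbN : ∀ x n, nbN (x ⊗ₜ n) = dE x ⊗ₜ n + x ⊗ₜ nN n)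
    {nH : (M →ₗ[S] N) →+ (M →ₗ[S] N)} (hnH : IsConnection dS nH)
    (hnH_apply : ∀ (g : M →ₗ[S] N) (m : M), nH g m = nN (g m) - g (nM m))
    (h : E ⊗[S] (M →ₗ[S] N)) (u : E ⊗[S] M) :
    linearMapBaseChangeEquiv S E M N (baseChangeConn hd nH hnH h) u =
      nbN (linearMapBaseChangeEquiv S E M N h u) - linearMapBaseChangeEquiv S E M N h (nbM u) := by
  induction h using TensorProduct.induction_on with
  | zero => simp
  | add h₁ h₂ ih₁ ih₂ =>
    simp only [map_add, LinearMap.add_apply, ih₁, ih₂]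
    abel
  | tmul x g =>
    induction u using TensorProduct.induction_on with
    | zero => simp
    | add u₁ u₂ ih₁ ih₂ =>
      simp only [map_add, ih₁, ih₂]
      abel
    | tmul y m =>
      simp only [baseChangeConn_tmul, hnbM, hnbN, map_add, LinearMap.add_apply,
        linearMapBaseChangeEquiv_tmul_tmul, hnH_apply, Derivation.leibniz, smul_eq_mul,
        TensorProduct.tmul_sub, TensorProduct.add_tmul]
      rw [mul_comm y (dE x)]
      abel

theorem TrivializedBy.linearMap [Module.Finite S M] [Module.Free S M]
    [Module.Finite S N] [Module.Free S N]
    (hd : ∀ x : S, dE (algebraMap S E x) = algebraMap S E (dS x))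
    (hnN : IsConnection dS nN) (hM : TrivializedBy S dE nM) (hN : TrivializedBy S dE nN)
    {nH : (M →ₗ[S] N) →+ (M →ₗ[S] N)}
    (hnH : ∀ (g : M →ₗ[S] N) (m : M), nH g m = nN (g m) - g (nM m)) :
    TrivializedBy S dE nH := by
  obtain ⟨nbM, hnbM, hM⟩ := hM
  obtain ⟨nbN, hnbN, hN⟩ := hN
  obtain ⟨_, v, hv⟩ := hM.exists_basis
  obtain ⟨_, w, hw⟩ := hN.exists_basis
  have hnH' := isConnection_linearMap hnN hnH
  set e := linearMapBaseChangeEquiv S E M N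
  refine ⟨_, baseChangeConn_tmul hd hnH', isTrivial_of_basis (isConnection_baseChangeConn hd _)
    ((v.linearMap w).map e.symm) fun ij => e.injective (v.ext fun k => ?_)⟩
  rw [linearMapBaseChangeEquiv_baseChangeConn hd hnbM hnbN hnH' hnH, Module.Basis.map_apply,
    e.apply_symm_apply, hv, map_zero, sub_zero, Module.Basis.linearMap_apply_apply, map_zero,
    LinearMap.zero_apply]
  split_ifs <;> simp [hw]

end TrivializedBy

theorem isRegSing_iff {K A : Type} [Field K] [CommRing A] [Algebra (LaurentPolynomial K) A]
    {D : Derivation ℤ (EA K A) (EA K A)} {M : Type} [AddCommGroup M] [Module A M]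
    {nM : M →+ M} :
    IsRegSing D nM ↔ Module.Finite A M ∧ Module.Free A M ∧ TrivializedBy A (E := EA K A) D nM :=
  Iff.rfl

theorem stmt_17 (K : Type) [Field K]
    (A : Type) [CommRing A] [Algebra K A] [Algebra (LaurentPolynomial K) A]
    [IsScalarTower K (LaurentPolynomial K) A]
    (dA : Derivation ℤ A A)
    (D : Derivation ℤ (EA K A) (EA K A)) (hD : DProps (K := K) dA D)
    (M : Type) [AddCommGroup M] [Module A M]
    (nM : M →+ M) (hnM : IsConnection dA nM) (hM : IsRegSing D nM)
    (N : Type) [AddCommGroup N] [Module A N]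
    (nN : N →+ N) (hnN : IsConnection dA nN) (hN : IsRegSing D nN) :
    -- the internal hom `Hom_A(M,N)` is regular singular
    (∀ nH : (M →ₗ[A] N) →+ (M →ₗ[A] N),
      (∀ (g : M →ₗ[A] N) (m : M), nH g m = nN (g m) - g (nM m)) →
        IsRegSing D nH) ∧
    -- the tensor product `M ⊗_A N` is regular singular
    (∀ nT : (M ⊗[A] N) →+ (M ⊗[A] N),
      (∀ (m : M) (n : N), nT (m ⊗ₜ[A] n) = nM m ⊗ₜ[A] n + m ⊗ₜ[A] nN n) →
        IsRegSing D nT) ∧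
    -- in particular the dual `M* = Hom_A(M,A)` is regular singular
    (∀ nD : (M →ₗ[A] A) →+ (M →ₗ[A] A),
      (∀ (g : M →ₗ[A] A) (m : M), nD g m = dA (g m) - g (nM m)) →
        IsRegSing D nD) := by
  have hd : ∀ x : A, D (algebraMap A (EA K A) x) = algebraMap A (EA K A) (dA x) := hD.1
  obtain ⟨_, _, hMtriv⟩ := isRegSing_iff.mp hM
  obtain ⟨_, _, hNtriv⟩ := isRegSing_iff.mp hN
  refine ⟨fun nH hnH => isRegSing_iff.mpr ⟨inferInstance, inferInstance, ?_⟩,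
    fun nT hnT => isRegSing_iff.mpr ⟨inferInstance, inferInstance, ?_⟩,
    fun nD hnD => isRegSing_iff.mpr ⟨inferInstance, inferInstance, ?_⟩⟩
  · exact hMtriv.linearMap hd hnN hNtriv hnH
  · exact hMtriv.tensorProduct hd hnM hNtriv hnT
  · exact hMtriv.linearMap hd (isConnection_derivation dA) (trivializedBy_derivation hd) hnD

end
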